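/- arXiv:math/0509596 — 2 statements merged into one kernel-verified Lean document; each statement's English description precedes it below -/
import Mathlib

section
/- For every natural number n with n ≥ 3 and n ≠ 6, every automorphism of the symmetric group S_n is inner; that is, for every group automorphism φ of Equiv.Perm (Fin n) there exists a permutation g such that φ is conjugation by g (φ σ = g σ g⁻¹ for all σ). -/
/-!
An automorphism `φ` of `Perm α` sends a transposition `τ` to an involution of the same sign,
i.e. one moving `2k` points with `k` odd. A product of two transpositions moves at most four
points, so its order divides `12`; hence `φ τ` has no conjugate `y` with `(φ τ * y) ^ 12 ≠ 1`.
Every involution moving `2k ≥ 6` points has such a conjugate unless `k = 3` and `|α| = 6`,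
so `k = 1`. Once transpositions are preserved, the images of the transpositions `(z i)` pairwise
overlap without forming a triangle, so they share a point `p`, and `φ` is conjugation by the
permutation `z ↦ p`, `i ↦ φ (z i) p`.
-/

open Equiv Equiv.Perm Finset Function

def HasConjMulPowNeOne {G : Type*} [Group G] (n : ℕ) (x : G) : Prop :=
  ∃ g : G, (x * (g * x * g⁻¹)) ^ n ≠ 1

namespace HasConjMulPowNeOne

variable {G H F : Type*} [Group G] [Group H] {n : ℕ} {x : G}

theorem map [FunLike F G H] [MonoidHomClass F G H] (h : HasConjMulPowNeOne n x) {f : F}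
    (hf : Injective f) : HasConjMulPowNeOne n (f x) := by
  obtain ⟨g, hg⟩ := h
  refine ⟨f g, ?_⟩
  rwa [← map_inv, ← map_mul, ← map_mul, ← map_mul, ← map_pow, Ne, ← map_one f, hf.eq_iff]

theorem prodMk (h : HasConjMulPowNeOne n x) (y : H) : HasConjMulPowNeOne n (x, y) := by
  obtain ⟨g, hg⟩ := h
  exact ⟨(g, 1), fun h1 => hg (by simpa using congrArg Prod.fst h1)⟩

end HasConjMulPowNeOne

namespace Equiv.Perm

variable {α β γ : Type*} [DecidableEq α]

theorem IsSwap.conj {σ : Perm α} (h : σ.IsSwap) (g : Perm α) : (g * σ * g⁻¹).IsSwap := by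
  obtain ⟨x, y, hxy, rfl⟩ := h
  exact ⟨g x, g y, g.injective.ne hxy, (swap_apply_apply g x y).symm⟩

theorem IsSwap.eq_swap_apply {σ : Perm α} (h : σ.IsSwap) {x : α} (hx : σ x ≠ x) :
    σ = swap x (σ x) := by
  obtain ⟨a, b, -, rfl⟩ := h
  rcases eq_or_ne x a with rfl | hxa
  · rw [swap_apply_left]
  rcases eq_or_ne x b with rfl | hxb
  · rw [swap_apply_right, swap_comm]
  exact absurd (swap_apply_of_ne_of_ne hxa hxb) hx

theorem apply_ne_self_of_not_disjoint_swap {σ : Perm α} {a b : α}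
    (h : ¬σ.Disjoint (swap a b)) (hb : σ b = b) : σ a ≠ a := by
  refine fun ha => h fun y => ?_
  rcases eq_or_ne y a with rfl | hya
  · exact Or.inl ha
  rcases eq_or_ne y b with rfl | hyb
  · exact Or.inl hb
  exact Or.inr (swap_apply_of_ne_of_ne hya hyb)

theorem not_commute_swap_swap {z i j : α} (hi : i ≠ z) (hj : j ≠ z) (hij : i ≠ j) :
    ¬Commute (swap z i) (swap z j) := fun h => hij <| Eq.symm <| by
  simpa [swap_apply_of_ne_of_ne hj hij.symm, swap_apply_of_ne_of_ne hi hij] using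
    congr($(h.eq) z)

theorem swap_mul_swap_mul_swap_ne_swap {z i j l : α} (hi : i ≠ z) (hj : j ≠ z) (hl : l ≠ z)
    (hij : i ≠ j) : swap z i * swap z j * (swap z i)⁻¹ ≠ swap z l := by
  rw [swap_inv, swap_comm z j, swap_mul_swap_mul_swap hj hij.symm]
  intro h
  have hz := congr($h z)
  rw [swap_apply_of_ne_of_ne hi.symm hj.symm, swap_apply_left] at hz
  exact hl hz.symm

/-- Pairwise overlapping transpositions either share a point or contain a triangle
`(a b), (a c), (b c)`, and in a triangle each one conjugates another to the third. -/
theorem exists_forall_apply_ne_of_isSwap [Nonempty α] {ι : Type*} (s : ι → Perm α)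
    (hs : ∀ i, (s i).IsSwap) (hmeet : Pairwise fun i j => ¬(s i).Disjoint (s j))
    (htri : ∀ i j l, i ≠ j → s i * s j * (s i)⁻¹ ≠ s l) : ∃ p, ∀ i, s i p ≠ p := by
  rcases isEmpty_or_nonempty ι with hι | ⟨⟨o⟩⟩
  · exact ⟨Classical.arbitrary α, isEmptyElim⟩
  obtain ⟨a, b, hab, hso⟩ := hs o
  by_contra! hfix
  obtain ⟨i, hib⟩ := hfix b
  obtain ⟨j, hja⟩ := hfix a
  have hio : i ≠ o := by rintro rfl; rw [hso, swap_apply_right] at hib; exact hab hib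
  have hjo : j ≠ o := by rintro rfl; rw [hso, swap_apply_left] at hja; exact hab hja.symm
  have hia : s i a ≠ a := apply_ne_self_of_not_disjoint_swap (hso ▸ hmeet hio) hib
  have hjb : s j b ≠ b :=
    apply_ne_self_of_not_disjoint_swap (swap_comm a b ▸ hso ▸ hmeet hjo) hja
  have hsi := (hs i).eq_swap_apply hia
  have hsj := (hs j).eq_swap_apply hjb
  have hcb : s i a ≠ b := fun h => hab (by rw [hsi, h, swap_apply_right] at hib; exact hib)
  have hda : s j b ≠ a := fun h => hab (by rw [hsj, h, swap_apply_right] at hja; exact hja.symm)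
  have hcd : s i a = s j b := by
    by_contra hcd
    refine hmeet (fun hij : i = j => hia (hij ▸ hja)) fun y => ?_
    rcases eq_or_ne y a with rfl | hya
    · exact Or.inr hja
    rcases eq_or_ne y (s i a) with rfl | hyc
    · exact Or.inr (by rw [hsj]; exact swap_apply_of_ne_of_ne hcb hcd)
    · exact Or.inl (by rw [hsi]; exact swap_apply_of_ne_of_ne hya hyc)
  refine htri j o i hjo ?_
  rw [hsi, hsj, hso, ← swap_apply_apply, swap_apply_of_ne_of_ne hab hda.symm, swap_apply_left,
    hcd]

theorem monoidHom_ext_swap_left [Finite α] {G : Type*} [Monoid G] (z : α) {f g : Perm α →* G}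
    (h : ∀ i, f (swap z i) = g (swap z i)) : f = g := by
  refine MonoidHom.eq_of_eqOn_denseM mclosure_isSwap ?_
  rintro _ ⟨u, v, huv, rfl⟩
  rcases eq_or_ne v z with rfl | hv
  · rw [swap_comm]; exact h u
  have huv : swap u v = swap z u * swap z v * swap z u := by
    rw [swap_comm z v, swap_mul_swap_mul_swap hv huv.symm]
  rw [huv, map_mul, map_mul, map_mul, map_mul, h, h]

theorem exists_swap_conj_eq [Finite α] {z p : α} {s : α → Perm α} (hs : ∀ i ≠ z, (s i).IsSwap)
    (hp : ∀ i ≠ z, s i p ≠ p) (hinj : Set.InjOn s {z}ᶜ) :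
    ∃ g : Perm α, ∀ i ≠ z, g * swap z i * g⁻¹ = s i := by
  have hsp : ∀ i ≠ z, s i = swap p (s i p) := fun i hi => (hs i hi).eq_swap_apply (hp i hi)
  let f : α → α := fun x => if x = z then p else s x p
  have hf : Injective f := by
    intro u v huv
    by_cases hu : u = z <;> by_cases hv : v = z
    · rw [hu, hv]
    · simp only [f, hu, hv, if_true, if_false] at huv
      exact absurd huv.symm (hp v hv)
    · simp only [f, hu, hv, if_true, if_false] at huv
      exact absurd huv (hp u hu)
    · refine hinj hu hv ?_
      rw [hsp u hu, hsp v hv]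
      simpa [f, hu, hv] using congrArg (swap p) huv
  refine ⟨Equiv.ofBijective f (Finite.injective_iff_bijective.1 hf), fun i hi => ?_⟩
  rw [← swap_apply_apply, hsp i hi]
  simp [f, hi]

theorem exists_mulAut_eq_conj_of_isSwap_apply [Finite α] (φ : MulAut (Perm α))
    (hφ : ∀ τ : Perm α, τ.IsSwap → (φ τ).IsSwap) : ∃ g : Perm α, φ = MulAut.conj g := by
  rcases isEmpty_or_nonempty α with hα | hα
  · exact ⟨1, Subsingleton.elim _ _⟩
  obtain ⟨z⟩ := id hα
  let s : α → Perm α := fun i => φ (swap z i)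
  have hs : ∀ i ≠ z, (s i).IsSwap := fun i hi => hφ _ ⟨z, i, hi.symm, rfl⟩
  have hinj : Set.InjOn s {z}ᶜ := fun u _ v _ huv => by
    simpa using congr($(φ.injective huv) z)
  obtain ⟨p, hp⟩ := exists_forall_apply_ne_of_isSwap (fun i : {i // i ≠ z} => s i)
    (fun i => hs i i.2)
    (fun i j hij hdisj => not_commute_swap_swap i.2 j.2 (Subtype.coe_ne_coe.2 hij)
      (φ.injective (by simpa only [map_mul] using hdisj.commute.eq)))
    (fun i j l hij h => swap_mul_swap_mul_swap_ne_swap i.2 j.2 l.2 (Subtype.coe_ne_coe.2 hij)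
      (φ.injective (by simpa only [map_mul, map_inv] using h)))
  obtain ⟨g, hg⟩ := exists_swap_conj_eq hs (fun i hi => hp ⟨i, hi⟩) hinj
  refine ⟨g, MulEquiv.toMonoidHom_injective (monoidHom_ext_swap_left z fun i => ?_)⟩
  rcases eq_or_ne i z with rfl | hi
  · rw [swap_self, ← Perm.one_def, map_one, map_one]
  exact (hg i hi).symm

variable [Fintype α]

theorem pow_twelve_eq_one_of_card_support_le_four {σ : Perm α} (h : #σ.support ≤ 4) :
    σ ^ 12 = 1 := by
  rw [← orderOf_dvd_iff_pow_eq_one, ← lcm_cycleType]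
  refine Multiset.lcm_dvd.2 fun d hd => ?_
  have h2 := two_le_of_mem_cycleType hd
  have h4 := (le_card_support_of_mem_cycleType hd).trans h
  interval_cases d <;> norm_num

theorem IsSwap.mul_pow_twelve {σ τ : Perm α} (hσ : σ.IsSwap) (hτ : τ.IsSwap) :
    (σ * τ) ^ 12 = 1 := by
  apply pow_twelve_eq_one_of_card_support_le_four
  calc #(σ * τ).support ≤ #(σ.support ∪ τ.support) := card_le_card (support_mul_le σ τ)
    _ ≤ #σ.support + #τ.support := card_union_le _ _
    _ = 4 := by rw [card_support_eq_two.2 hσ, card_support_eq_two.2 hτ]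

theorem IsSwap.not_hasConjMulPowNeOne {σ : Perm α} (h : σ.IsSwap) :
    ¬HasConjMulPowNeOne 12 σ := by
  rintro ⟨g, hg⟩
  exact hg (h.mul_pow_twelve (h.conj g))

theorem sign_mulAut_apply [Nontrivial α] (φ : MulAut (Perm α)) (σ : Perm α) :
    sign (φ σ) = sign σ :=
  DFunLike.congr_fun (eq_sign_of_surjective_hom (s := sign.comp φ.toMonoidHom)
    ((sign_surjective α).comp φ.surjective)) σ

theorem card_support_eq_two_mul_of_sq_eq_one {σ : Perm α} (h : σ ^ 2 = 1) :
    #σ.support = 2 * Multiset.card σ.cycleType := by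
  rw [← sum_cycleType, cycleType_of_pow_prime_eq_one h]
  simp [mul_comm]

theorem sign_of_sq_eq_one {σ : Perm α} (h : σ ^ 2 = 1) :
    sign σ = (-1) ^ Multiset.card σ.cycleType := by
  rw [sign_of_cycleType, cycleType_of_pow_prime_eq_one h]
  simp [pow_add, pow_mul]

theorem isConj_of_sq_eq_one {σ τ : Perm α} (hσ : σ ^ 2 = 1) (hτ : τ ^ 2 = 1)
    (h : #σ.support = #τ.support) : IsConj σ τ := by
  rw [card_support_eq_two_mul_of_sq_eq_one hσ, card_support_eq_two_mul_of_sq_eq_one hτ] at h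
  rw [isConj_iff_cycleType_eq, cycleType_of_pow_prime_eq_one hσ,
    cycleType_of_pow_prime_eq_one hτ]
  congr 1
  omega

theorem exists_sq_eq_one_card_support {k : ℕ} (h : 2 * k ≤ Fintype.card α) :
    ∃ t : Perm α, t ^ 2 = 1 ∧ #t.support = 2 * k := by
  obtain ⟨t, ht⟩ := (exists_with_cycleType_iff α (m := Multiset.replicate k 2)).2
    ⟨by simpa [mul_comm] using h, fun a ha => (Multiset.eq_of_mem_replicate ha).ge⟩
  refine ⟨t, ?_, ?_⟩
  · rw [← orderOf_dvd_iff_pow_eq_one, ← lcm_cycleType, ht]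
    exact Multiset.lcm_dvd.2 fun d hd => by rw [Multiset.eq_of_mem_replicate hd]
  · rw [← sum_cycleType, ht]
    simp [mul_comm]

theorem card_support_sumCongr [DecidableEq β] [Fintype β] [DecidableEq γ] [Fintype γ]
    (σ : Perm β) (τ : Perm γ) : #(sumCongr σ τ).support = #σ.support + #τ.support := by
  rw [← card_disjSum]
  congr 1
  ext (x | x) <;> simp

theorem card_support_permCongr [DecidableEq β] [Fintype β] (e : β ≃ α) (σ : Perm β) :
    #(e.permCongr σ).support = #σ.support := by
  rw [← card_map e.toEmbedding]
  congr 1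
  ext x
  simp [permCongr_apply, eq_symm_apply]

theorem hasConjMulPowNeOne_of_sq_eq_one {m j k N : ℕ} {x₀ : Perm (Fin m)} (hx₀ : x₀ ^ 2 = 1)
    (hx₀j : #x₀.support = 2 * j) (hx₀N : HasConjMulPowNeOne N x₀) (hjk : j ≤ k)
    (hm : m + 2 * (k - j) ≤ Fintype.card α) {x : Perm α} (hx : x ^ 2 = 1)
    (hxk : #x.support = 2 * k) : HasConjMulPowNeOne N x := by
  obtain ⟨t, ht, htk⟩ := exists_sq_eq_one_card_support (α := Fin (Fintype.card α - m))
    (k := k - j) (by rw [Fintype.card_fin]; omega)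
  let e : Fin m ⊕ Fin (Fintype.card α - m) ≃ α :=
    (finSumFinEquiv.trans (finCongr (by omega))).trans (Fintype.equivFin α).symm
  let f : Perm (Fin m) × Perm (Fin (Fintype.card α - m)) →* Perm α :=
    e.permCongrHom.toMonoidHom.comp (sumCongrHom _ _)
  have hf : Injective f := e.permCongrHom.injective.comp sumCongrHom_injective
  have hf2 : f (x₀, t) ^ 2 = 1 := by
    rw [← map_pow, Prod.pow_mk, hx₀, ht, Prod.mk_one_one, map_one]
  have hfk : #(f (x₀, t)).support = 2 * k := by
    simp only [f, MonoidHom.comp_apply, MulEquiv.coe_toMonoidHom, permCongrHom_coe,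
      sumCongrHom_apply, card_support_permCongr, card_support_sumCongr, hx₀j, htk]
    omega
  obtain ⟨c, hc⟩ := isConj_iff.1 (isConj_of_sq_eq_one hf2 hx (hfk.trans hxk.symm))
  rw [← hc]
  simpa only [MulAut.conj_apply] using ((hx₀N.prodMk t).map hf).map (MulAut.conj c).injective

/-- In `Perm (Fin 5)` the conjugates `(0 1)(2 3)` and `(1 2)(3 4)` multiply to a `5`-cycle; in
`Perm (Fin 10)` the conjugates `(0 1)(2 3)(4 5)(6 7)(8 9)` and `(1 2)(3 4)(5 6)(7 8)(9 0)` multiply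
to a product of two `5`-cycles. Padding these by further pairs covers every involution moving `2k`
points except when all `2k = 6` points of a six-element set are moved. -/
theorem hasConjMulPowNeOne_twelve {x : Perm α} (hx : x ^ 2 = 1) {k : ℕ}
    (hxk : #x.support = 2 * k)
    (hk : 2 ≤ k ∧ 2 * k < Fintype.card α ∨ 5 ≤ k ∧ 2 * k ≤ Fintype.card α) :
    HasConjMulPowNeOne 12 x := by
  rcases hk with ⟨hk, hα⟩ | ⟨hk, hα⟩
  · exact hasConjMulPowNeOne_of_sq_eq_one (x₀ := swap (0 : Fin 5) 1 * swap 2 3) (j := 2)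
      (by decide) (by decide) ⟨finRotate 5, by decide +kernel⟩ hk (by omega) hx hxk
  · exact hasConjMulPowNeOne_of_sq_eq_one
      (x₀ := swap (0 : Fin 10) 1 * swap 2 3 * swap 4 5 * swap 6 7 * swap 8 9) (j := 5)
      (by decide) (by decide) ⟨finRotate 10, by decide +kernel⟩ hk (by omega) hx hxk

theorem IsSwap.mulAut_apply (hα : Fintype.card α ≠ 6) (φ : MulAut (Perm α)) {τ : Perm α}
    (hτ : τ.IsSwap) : (φ τ).IsSwap := by
  have : Nontrivial α := by
    obtain ⟨a, b, hab, -⟩ := hτ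
    exact nontrivial_of_ne a b hab
  have hx : φ τ ^ 2 = 1 := by rw [← map_pow, ← hτ.orderOf, pow_orderOf_eq_one, map_one]
  obtain ⟨r, hr⟩ : Odd (Multiset.card (φ τ).cycleType) := by
    have hsign := sign_of_sq_eq_one hx
    rw [sign_mulAut_apply, hτ.sign_eq] at hsign
    exact (neg_one_pow_eq_neg_one_iff_odd (R := ℤˣ) (by decide)).1 hsign.symm
  have hxk := card_support_eq_two_mul_of_sq_eq_one hx
  rw [← card_support_eq_two, hxk]
  by_contra hk
  have hcard := card_le_univ (φ τ).support
  rw [hxk] at hcard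
  have hφτ := hasConjMulPowNeOne_twelve hx hxk (by omega)
  exact hτ.not_hasConjMulPowNeOne (by simpa using hφτ.map φ.symm.injective)

theorem exists_mulAut_eq_conj (hα : Fintype.card α ≠ 6) (φ : MulAut (Perm α)) :
    ∃ g : Perm α, φ = MulAut.conj g :=
  exists_mulAut_eq_conj_of_isSwap_apply φ fun _ hτ => hτ.mulAut_apply hα φ

end Equiv.Perm

theorem symm_group_aut_inner_general (n : ℕ) (hn6 : n ≠ 6)
    (φ : MulAut (Equiv.Perm (Fin n))) :
    ∃ g : Equiv.Perm (Fin n), ∀ σ : Equiv.Perm (Fin n), φ σ = g * σ * g⁻¹ := by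
  obtain ⟨g, rfl⟩ := exists_mulAut_eq_conj (by rwa [Fintype.card_fin]) φ
  exact ⟨g, MulAut.conj_apply g⟩

theorem symm_group_aut_inner (n : ℕ) (hn : 3 ≤ n) (hn6 : n ≠ 6)
    (φ : MulAut (Equiv.Perm (Fin n))) :
    ∃ g : Equiv.Perm (Fin n), ∀ σ : Equiv.Perm (Fin n), φ σ = g * σ * g⁻¹ :=
  symm_group_aut_inner_general n hn6 φ
end

section
/- The symmetric group S_6 has an outer automorphism: there exists a group automorphism φ of Equiv.Perm (Fin 6) that is not inner, i.e. there is no permutation g of Fin 6 such that φ σ = g σ g⁻¹ for all σ. -/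
/-!
Conjugation permutes the six synthematic totals (the 1-factorizations of `K₆`), giving a
homomorphism `S₆ → S₆`. Its kernel is a normal subgroup missing a 3-cycle, hence trivial, since
every nontrivial normal subgroup of `S₆` contains `A₆`; so it is an automorphism. A transposition
fixes none of the totals, so its image has no fixed point, whereas conjugating a permutation with
a fixed point yields one with a fixed point.
-/

open Equiv Equiv.Perm Pointwise

theorem Equiv.Perm.injective_of_map_ne_one {α H : Type*} [DecidableEq α] [Fintype α] [Group H]
    (hα : 5 ≤ Nat.card α) (f : Perm α →* H) {c : Perm α} (hc : c ∈ alternatingGroup α)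
    (hfc : f c ≠ 1) : Function.Injective f := by
  rw [← f.ker_eq_bot_iff]
  by_contra hker
  have : Nontrivial f.ker := (Subgroup.nontrivial_iff_ne_bot _).mpr hker
  exact hfc (alternatingGroup_le_of_normal hα this hc)

theorem MulAut.not_exists_conj_of_apply_ne_self {α : Type*} (φ : MulAut (Perm α)) {σ : Perm α}
    {a : α} (ha : σ a = a) (hφ : ∀ x, φ σ x ≠ x) :
    ¬ ∃ g : Perm α, ∀ τ, φ τ = g * τ * g⁻¹ := by
  rintro ⟨g, hg⟩
  apply hφ (g a)
  simp [hg, ha]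

namespace SymmetricGroupSix

/-- The syntheme `{ab, cd, ef}` (a perfect matching of `K₆`), encoded as the involution
`(a b)(c d)(e f)` so that `S₆` acts on synthemes by conjugation. -/
def syntheme (a b c d e f : Fin 6) : Perm (Fin 6) := swap a b * swap c d * swap e f

def synthematicTotals : Finset (Finset (Perm (Fin 6))) :=
  {{syntheme 0 1 2 3 4 5, syntheme 0 2 1 4 3 5, syntheme 0 3 1 5 2 4, syntheme 0 4 1 3 2 5,
      syntheme 0 5 1 2 3 4},
    {syntheme 0 1 2 3 4 5, syntheme 0 2 1 5 3 4, syntheme 0 3 1 4 2 5, syntheme 0 4 1 2 3 5,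
      syntheme 0 5 1 3 2 4},
    {syntheme 0 1 2 4 3 5, syntheme 0 2 1 3 4 5, syntheme 0 3 1 4 2 5, syntheme 0 4 1 5 2 3,
      syntheme 0 5 1 2 3 4},
    {syntheme 0 1 2 4 3 5, syntheme 0 2 1 5 3 4, syntheme 0 3 1 2 4 5, syntheme 0 4 1 3 2 5,
      syntheme 0 5 1 4 2 3},
    {syntheme 0 1 2 5 3 4, syntheme 0 2 1 3 4 5, syntheme 0 3 1 5 2 4, syntheme 0 4 1 2 3 5,
      syntheme 0 5 1 4 2 3},
    {syntheme 0 1 2 5 3 4, syntheme 0 2 1 4 3 5, syntheme 0 3 1 2 4 5, syntheme 0 4 1 5 2 3,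
      syntheme 0 5 1 3 2 4}}

theorem smul_synthematicTotals (g : Perm (Fin 6)) :
    ConjAct.toConjAct g • synthematicTotals = synthematicTotals := by
  suffices h : Subgroup.closure {finRotate 6, swap 0 (finRotate 6 0)} ≤
      (MulAction.stabilizer (ConjAct (Perm (Fin 6))) synthematicTotals).comap
        (ConjAct.toConjAct : Perm (Fin 6) ≃* ConjAct (Perm (Fin 6))).toMonoidHom by
    rw [closure_cycle_adjacent_swap isCycle_finRotate support_finRotate] at h
    exact h (Subgroup.mem_top _)
  simp only [Subgroup.closure_le, Set.insert_subset_iff, Set.singleton_subset_iff, SetLike.mem_coe,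
    Subgroup.mem_comap, MulEquiv.coe_toMonoidHom, MulAction.mem_stabilizer_iff]
  exact ⟨by decide, by decide⟩

-- `decide` on the bounded quantifier exhausts the recursion limit; on the `filter` it is instant.
theorem swap_smul_ne_of_mem : ∀ S ∈ synthematicTotals, ConjAct.toConjAct (swap (0 : Fin 6) 1) • S ≠ S :=
  Finset.filter_eq_empty_iff.mp (by decide)

theorem threeCycle_smul_ne_of_mem :
    ∀ S ∈ synthematicTotals, ConjAct.toConjAct (swap (0 : Fin 6) 1 * swap 1 2) • S ≠ S :=
  Finset.filter_eq_empty_iff.mp (by decide)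

def totalsSubMulAction : SubMulAction (ConjAct (Perm (Fin 6))) (Finset (Perm (Fin 6))) where
  carrier := synthematicTotals
  smul_mem' g S hS := by
    rw [← g.toConjAct_ofConjAct, ← smul_synthematicTotals g.ofConjAct]
    exact Finset.smul_mem_smul_finset hS

theorem nat_card_totalsSubMulAction : Nat.card totalsSubMulAction = 6 :=
  (Nat.card_coe_set_eq (synthematicTotals : Set (Finset (Perm (Fin 6))))).trans
    ((Set.ncard_coe_finset _).trans (by decide))

noncomputable def actionOnTotals : Perm (Fin 6) →* Perm (Fin 6) :=
  (Finite.equivFinOfCardEq nat_card_totalsSubMulAction).permCongrHom.toMonoidHom.comp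
    ((MulAction.toPermHom _ totalsSubMulAction).comp ConjAct.toConjAct.toMonoidHom)

theorem actionOnTotals_apply_ne_self {σ : Perm (Fin 6)}
    (hσ : ∀ S ∈ synthematicTotals, ConjAct.toConjAct σ • S ≠ S) (x : Fin 6) :
    actionOnTotals σ x ≠ x := by
  set e := Finite.equivFinOfCardEq nat_card_totalsSubMulAction
  intro h
  have hfix : ConjAct.toConjAct σ • (e.symm x : Finset (Perm (Fin 6))) = e.symm x := by
    simpa [actionOnTotals, e] using congrArg (fun y => (e.symm y : Finset (Perm (Fin 6)))) h
  exact hσ _ (e.symm x).2 hfix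

theorem injective_actionOnTotals : Function.Injective actionOnTotals :=
  injective_of_map_ne_one (by simp) actionOnTotals (c := swap 0 1 * swap 1 2)
    (mem_alternatingGroup.mpr (by decide)) fun h => actionOnTotals_apply_ne_self threeCycle_smul_ne_of_mem 0 (by rw [h]; rfl)

noncomputable def outerAut : MulAut (Perm (Fin 6)) :=
  MulEquiv.ofBijective actionOnTotals (Finite.injective_iff_bijective.mp injective_actionOnTotals)

end SymmetricGroupSix

theorem symm_group_six_outer_aut :
    ∃ φ : MulAut (Equiv.Perm (Fin 6)),
      ¬ ∃ g : Equiv.Perm (Fin 6), ∀ σ : Equiv.Perm (Fin 6), φ σ = g * σ * g⁻¹ :=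
  ⟨SymmetricGroupSix.outerAut, MulAut.not_exists_conj_of_apply_ne_self _ (a := 2) (by decide)
    (SymmetricGroupSix.actionOnTotals_apply_ne_self SymmetricGroupSix.swap_smul_ne_of_mem)⟩
end
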